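/- arXiv:1207.6053 — 4 statements merged into one kernel-verified Lean document; each statement's English description precedes it below -/
import Mathlib

section
/- Every positive semidefinite Toeplitz matrix P ∈ ℂ^{n×n} of rank r can be written as P = V D V*, where V is the n×r Vandermonde matrix with columns a(f_k) = (e^{i2πf_k·0}, ..., e^{i2πf_k(n-1)})ᵀ for distinct frequencies f_1,...,f_r ∈ [0,1), and D = diag(d_1,...,d_r) with each d_k > 0. -/
open Complex Matrix
open scoped ComplexOrder

/-- The atom `a(f)` with entries `e^{i2πfj}`, `j = 0, ..., n-1`. -/
noncomputable def atomVec (n : ℕ) (f : ℝ) : Fin n → ℂ :=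
  fun j => Complex.exp (Complex.I * (2 * Real.pi * f * j))

/-!
Write `P` as the Gram matrix of vectors `w₀, …, w_{n-1}` spanning a space `W` of dimension `r`.
Toeplitz structure says that `(w₀, …, w_{n-2})` and `(w₁, …, w_{n-1})` have the same Gram matrix,
so some isometry `U` of `W` maps the first family onto the second, and `w_j = U^j w₀`.
Expanding `w₀` in an orthonormal eigenbasis of `U`, whose eigenvalues `e^{-i2πf_l}` lie on the unit
circle, gives `P_{jk} = ∑_l |c_l|² e^{i2πf_l(j-k)}` with `r` terms. Merging equal frequencies and
dropping zero weights leaves at most `r` atoms, and since each atom has rank one, exactly `r`.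
-/

open Finset Module LinearMap Submodule
open scoped InnerProductSpace ComplexConjugate

universe u

lemma Orthonormal.fin_cons {𝕜 E : Type*} [RCLike 𝕜] [SeminormedAddCommGroup E]
    [InnerProductSpace 𝕜 E] {m : ℕ} {x : E} {v : Fin m → E} (hv : Orthonormal 𝕜 v)
    (hx : ‖x‖ = 1) (hxv : ∀ l, ⟪x, v l⟫_𝕜 = 0) :
    Orthonormal 𝕜 (Fin.cons x v : Fin (m + 1) → E) := by
  refine ⟨Fin.cases hx hv.1, fun i j hij => ?_⟩
  cases i using Fin.cases <;> cases j using Fin.cases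
  · exact absurd rfl hij
  · exact hxv _
  · simpa [inner_eq_zero_symm] using hxv _
  · exact hv.2 fun h => hij (congrArg Fin.succ h)

section Isometry

variable {𝕜 E : Type*} [RCLike 𝕜] [NormedAddCommGroup E] [InnerProductSpace 𝕜 E]

lemma LinearIsometry.norm_eq_one_of_apply_eq_smul (U : E →ₗᵢ[𝕜] E) {v : E} {μ : 𝕜}
    (hv : v ≠ 0) (hUv : U v = μ • v) : ‖μ‖ = 1 := by
  have h := U.norm_map v
  rw [hUv, norm_smul] at h
  exact (mul_eq_right₀ (norm_ne_zero_iff.mpr hv)).mp h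

lemma LinearIsometry.mapsTo_orthogonal_span_singleton (U : E →ₗᵢ[𝕜] E) {v : E} {μ : 𝕜}
    (hv : v ≠ 0) (hUv : U v = μ • v) : Set.MapsTo U (𝕜 ∙ v)ᗮ (𝕜 ∙ v)ᗮ := by
  intro y hy
  rw [SetLike.mem_coe, mem_orthogonal_singleton_iff_inner_right] at hy ⊢
  have hμ : μ ≠ 0 := by
    rintro rfl
    simpa using U.norm_eq_one_of_apply_eq_smul hv hUv
  have h := U.inner_map_map v y
  rwa [hUv, inner_smul_left, hy, mul_eq_zero, or_iff_right (by simpa using hμ)] at h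

end Isometry

section Spectral

variable {E : Type u} [NormedAddCommGroup E] [InnerProductSpace ℂ E] [FiniteDimensional ℂ E]

theorem LinearIsometry.exists_orthonormal_eigenvectors (U : E →ₗᵢ[ℂ] E) :
    ∃ (v : Fin (finrank ℂ E) → E) (μ : Fin (finrank ℂ E) → ℂ),
      Orthonormal ℂ v ∧ ∀ l, U (v l) = μ l • v l := by
  suffices ∀ (m : ℕ) (E : Type u) [NormedAddCommGroup E] [InnerProductSpace ℂ E]
      [FiniteDimensional ℂ E], finrank ℂ E = m → ∀ U : E →ₗᵢ[ℂ] E,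
      ∃ (v : Fin m → E) (μ : Fin m → ℂ), Orthonormal ℂ v ∧ ∀ l, U (v l) = μ l • v l from
    this _ E rfl U
  intro m
  induction m with
  | zero =>
    exact fun _ _ _ _ _ _ =>
      ⟨Fin.elim0, Fin.elim0, ⟨fun i => i.elim0, fun i => i.elim0⟩, fun i => i.elim0⟩
  | succ m ih =>
    intro E _ _ _ hE U
    have : Nontrivial E := Module.nontrivial_of_finrank_eq_succ hE
    have : Fact (finrank ℂ E = m + 1) := ⟨hE⟩
    obtain ⟨μ₀, hμ₀⟩ := Module.End.exists_eigenvalue U.toLinearMap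
    obtain ⟨x, hx⟩ := hμ₀.exists_hasEigenvector
    set v₀ := (‖x‖⁻¹ : ℂ) • x
    have hv₀ : ‖v₀‖ = 1 := by
      simpa [v₀, norm_smul] using inv_mul_cancel₀ (norm_ne_zero_iff.mpr hx.2)
    have hv₀_ne : v₀ ≠ 0 := norm_ne_zero_iff.mp (by simp [hv₀])
    have hUv₀ : U v₀ = μ₀ • v₀ := by
      rw [map_smul, smul_comm]
      exact congrArg _ hx.apply_eq_smul
    set K := (ℂ ∙ v₀)ᗮ
    obtain ⟨v, μ, hv, hUv⟩ := ih K (finrank_orthogonal_span_singleton hv₀_ne)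
      ((U.toLinearMap.restrict (U.mapsTo_orthogonal_span_singleton hv₀_ne hUv₀)).isometryOfInner
        fun y z => U.inner_map_map y z)
    refine ⟨Fin.cons v₀ (K.subtypeₗᵢ ∘ v), Fin.cons μ₀ μ,
      (hv.comp_linearIsometry _).fin_cons hv₀ fun l => ?_, Fin.cases hUv₀ fun l => ?_⟩
    · exact mem_orthogonal_singleton_iff_inner_right.mp (v l).2
    · exact congrArg Subtype.val (hUv l)

theorem LinearIsometry.exists_orthonormalBasis_eigenvectors (U : E →ₗᵢ[ℂ] E) :
    ∃ (b : OrthonormalBasis (Fin (finrank ℂ E)) ℂ E) (μ : Fin (finrank ℂ E) → ℂ),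
      ∀ l, U (b l) = μ l • b l := by
  obtain ⟨v, μ, hv, hUv⟩ := U.exists_orthonormal_eigenvectors
  refine ⟨.mk hv (hv.linearIndependent.span_eq_top_of_card_eq_finrank' (by simp)).ge, μ, ?_⟩
  simpa using hUv

theorem LinearIsometry.exists_inner_pow_apply_eq_sum (U : E →ₗᵢ[ℂ] E) (x : E) :
    ∃ (μ : Fin (finrank ℂ E) → ℂ) (d : Fin (finrank ℂ E) → ℝ),
      (∀ l, ‖μ l‖ = 1) ∧ (∀ l, 0 ≤ d l) ∧
      ∀ j k : ℕ, ⟪(U ^ j) x, (U ^ k) x⟫_ℂ = ∑ l, (d l : ℂ) * conj (μ l) ^ j * μ l ^ k := by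
  obtain ⟨b, μ, hUb⟩ := U.exists_orthonormalBasis_eigenvectors
  have hUb_pow (j : ℕ) (l) : (U ^ j) (b l) = μ l ^ j • b l := by
    induction j with
    | zero => simp
    | succ j ih =>
      rw [pow_succ', LinearIsometry.coe_mul, Function.comp_apply, ih, map_smul, hUb, smul_smul,
        pow_succ]
  have hU_pow (j : ℕ) : (U ^ j) x = ∑ l, (⟪b l, x⟫_ℂ * μ l ^ j) • b l := by
    conv_lhs => rw [← b.sum_repr' x]
    simp only [map_sum, map_smul, hUb_pow, smul_smul]
  refine ⟨μ, fun l => normSq ⟪b l, x⟫_ℂ,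
    fun l => U.norm_eq_one_of_apply_eq_smul (b.orthonormal.ne_zero l) (hUb l),
    fun l => normSq_nonneg _, fun j k => ?_⟩
  rw [hU_pow, hU_pow, b.orthonormal.inner_sum]
  refine sum_congr rfl fun l _ => ?_
  rw [normSq_eq_conj_mul_self, map_mul, map_pow]
  ring

end Spectral

section Gram

variable {𝕜 E : Type*} [RCLike 𝕜] [NormedAddCommGroup E] [InnerProductSpace 𝕜 E]
  [FiniteDimensional 𝕜 E]

theorem LinearMap.exists_linearIsometry_comp_eq {X : Type*} [AddCommGroup X] [Module 𝕜 X]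
    (T₁ T₂ : X →ₗ[𝕜] E) (h : ∀ x y, ⟪T₁ x, T₁ y⟫_𝕜 = ⟪T₂ x, T₂ y⟫_𝕜) :
    ∃ U : E →ₗᵢ[𝕜] E, ∀ x, U (T₁ x) = T₂ x := by
  have hker : ker T₁ ≤ ker T₂ := fun x hx => by
    rw [mem_ker] at hx ⊢
    rw [← inner_self_eq_zero (𝕜 := 𝕜), ← h, hx, inner_zero_left]
  let φ : range T₁ →ₗ[𝕜] E := (ker T₁).liftQ T₂ hker ∘ₗ T₁.quotKerEquivRange.symm.toLinearMap
  have hφ (x : X) : φ (T₁.rangeRestrict x) = T₂ x := by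
    change (ker T₁).liftQ T₂ hker (T₁.quotKerEquivRange.symm ⟨T₁ x, mem_range_self T₁ x⟩) = T₂ x
    rw [quotKerEquivRange_symm_apply_image]
    rfl
  let ψ := φ.isometryOfInner <| by
    rintro ⟨_, x, rfl⟩ ⟨_, y, rfl⟩
    exact (congrArg₂ _ (hφ x) (hφ y)).trans (h x y).symm
  exact ⟨ψ.extend, fun x => (ψ.extend_apply (T₁.rangeRestrict x)).trans (hφ x)⟩

theorem exists_linearIsometry_apply_eq_of_gram_eq {ι : Type*} [Fintype ι] {v v' : ι → E}
    (h : gram 𝕜 v = gram 𝕜 v') : ∃ U : E →ₗᵢ[𝕜] E, ∀ i, U (v i) = v' i := by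
  classical
  obtain ⟨U, hU⟩ := (Fintype.linearCombination 𝕜 v).exists_linearIsometry_comp_eq
    (Fintype.linearCombination 𝕜 v') fun x y => by
      simp only [Fintype.linearCombination_apply, ← star_dotProduct_gram_mulVec, h]
  exact ⟨U, fun i => by simpa using hU (Pi.single i 1)⟩

theorem exists_linearIsometry_pow_apply_eq_of_gram_shift {m : ℕ} {w : Fin (m + 1) → E}
    (h : gram 𝕜 (w ∘ Fin.castSucc) = gram 𝕜 (w ∘ Fin.succ)) :
    ∃ U : E →ₗᵢ[𝕜] E, ∀ j : Fin (m + 1), (U ^ (j : ℕ)) (w 0) = w j := by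
  obtain ⟨U, hU⟩ := exists_linearIsometry_apply_eq_of_gram_eq h
  refine ⟨U, Fin.induction (by simp) fun j ih => ?_⟩
  rw [Fin.val_succ, pow_succ', LinearIsometry.coe_mul, Function.comp_apply, ← Fin.val_castSucc, ih]
  exact hU j

end Gram

theorem exists_inner_eq_sum_of_gram_shift {E : Type*} [NormedAddCommGroup E]
    [InnerProductSpace ℂ E] {m : ℕ} {w : Fin (m + 1) → E}
    (h : gram ℂ (w ∘ Fin.castSucc) = gram ℂ (w ∘ Fin.succ)) :
    ∃ (μ : Fin (finrank ℂ (span ℂ (Set.range w))) → ℂ)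
      (d : Fin (finrank ℂ (span ℂ (Set.range w))) → ℝ),
      (∀ l, ‖μ l‖ = 1) ∧ (∀ l, 0 ≤ d l) ∧
      ∀ j k : Fin (m + 1),
        ⟪w j, w k⟫_ℂ = ∑ l, (d l : ℂ) * conj (μ l) ^ (j : ℕ) * μ l ^ (k : ℕ) := by
  let w' (j : Fin (m + 1)) : span ℂ (Set.range w) := ⟨w j, subset_span (Set.mem_range_self j)⟩
  have := FiniteDimensional.span_of_finite ℂ (Set.finite_range w)
  obtain ⟨U, hU⟩ := exists_linearIsometry_pow_apply_eq_of_gram_shift (w := w') h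
  obtain ⟨μ, d, hμ, hd, hsum⟩ := U.exists_inner_pow_apply_eq_sum (w' 0)
  exact ⟨μ, d, hμ, hd, fun j k => (congrArg₂ (inner ℂ) (hU j) (hU k)).symm.trans (hsum j k)⟩

open scoped MatrixOrder in
theorem Matrix.PosSemidef.exists_gram_eq {𝕜 n : Type*} [RCLike 𝕜] [Fintype n] [DecidableEq n]
    {P : Matrix n n 𝕜} (hP : P.PosSemidef) :
    ∃ w : n → EuclideanSpace 𝕜 n, gram 𝕜 w = P ∧ finrank 𝕜 (span 𝕜 (Set.range w)) = P.rank := by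
  set C := CFC.sqrt P
  have hCC : Cᴴ * C = P := by
    rw [(CFC.sqrt_nonneg P).posSemidef.1.eq]
    exact CFC.sqrt_mul_sqrt_self P hP.nonneg
  refine ⟨(WithLp.linearEquiv 2 𝕜 (n → 𝕜)).symm ∘ C.col, ?_, ?_⟩
  · rw [← hCC]
    ext j k
    simp [gram_apply, EuclideanSpace.inner_eq_star_dotProduct, mul_apply, dotProduct, mul_comm]
  · rw [← hCC, rank_conjTranspose_mul_self, rank_eq_finrank_span_cols, Set.range_comp,
      ← LinearEquiv.coe_coe, ← Submodule.map_span, LinearEquiv.finrank_map_eq]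

lemma exists_mem_Ico_atomVec_eq_pow {μ : ℂ} (hμ : ‖μ‖ = 1) :
    ∃ f ∈ Set.Ico (0 : ℝ) 1, ∀ n (j : Fin n), atomVec n f j = μ ^ (j : ℕ) := by
  set θ := arg μ / (2 * Real.pi)
  refine ⟨Int.fract θ, ⟨Int.fract_nonneg θ, Int.fract_lt_one θ⟩, fun n j => ?_⟩
  have hexp : exp (I * (2 * Real.pi * Int.fract θ)) = μ := by
    have : I * (2 * Real.pi * (Int.fract θ : ℝ)) = arg μ * I - ⌊θ⌋ * (2 * Real.pi * I) := by
      simp only [θ, Int.fract, ofReal_sub, ofReal_div, ofReal_mul, ofReal_intCast]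
      field_simp
      push_cast
      ring
    rw [this, exp_sub, exp_int_mul_two_pi_mul_I, div_one]
    simpa [hμ] using norm_mul_exp_arg_mul_I μ
  rw [atomVec, ← hexp, ← exp_nat_mul]
  congr 1
  ring

theorem Finset.exists_sum_smul_comp_eq_sum_pos {ι α R M : Type*} [Fintype ι] [DecidableEq α]
    [Semiring R] [PartialOrder R] [IsOrderedAddMonoid R] [AddCommMonoid M] [Module R M]
    (f : ι → α) {d : ι → R} (hd : ∀ i, 0 ≤ d i) (g : α → M) :
    ∃ (F : Finset α) (D : α → R), F ⊆ univ.image f ∧ (∀ t ∈ F, 0 < D t) ∧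
      ∑ i, d i • g (f i) = ∑ t ∈ F, D t • g t := by
  classical
  let D (t : α) : R := ∑ i with f i = t, d i
  refine ⟨{t ∈ univ.image f | 0 < D t}, D, filter_subset _ _, fun t ht => (mem_filter.mp ht).2, ?_⟩
  rw [sum_filter_of_ne fun t _ hne => (sum_nonneg fun i _ => hd i).lt_of_ne'
      (left_ne_zero_of_smul hne),
    ← sum_fiberwise_of_maps_to fun i _ => mem_image_of_mem f (mem_univ i)]
  refine sum_congr rfl fun t _ => ?_
  rw [sum_smul]
  exact sum_congr rfl fun i hi => by rw [(mem_filter.mp hi).2]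

theorem Matrix.rank_sum_vecMulVec_le {ι m n R : Type*} [Fintype m] [Fintype n] [CommRing R]
    [StrongRankCondition R] (s : Finset ι) (u : ι → m → R) (v : ι → n → R) :
    (∑ i ∈ s, vecMulVec (u i) (v i)).rank ≤ #s := by
  have : ∑ i ∈ s, vecMulVec (u i) (v i) =
      (of fun j (i : s) => u i j) * of fun (i : s) k => v i k := by
    ext j k
    simp [mul_apply, Matrix.sum_apply, vecMulVec_apply, ← sum_coe_sort s]
  rw [this]
  exact (rank_mul_le_left _ _).trans ((rank_le_card_width _).trans (Fintype.card_coe s).le)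

noncomputable def atomMatrix (n : ℕ) (f : ℝ) : Matrix (Fin n) (Fin n) ℂ :=
  vecMulVec (atomVec n f) (star (atomVec n f))

theorem exists_sum_smul_atomMatrix_of_toeplitz {n : ℕ} {P : Matrix (Fin n) (Fin n) ℂ}
    (hToep : ∀ j k j' k' : Fin n, (j : ℤ) - (k : ℤ) = (j' : ℤ) - (k' : ℤ) → P j k = P j' k')
    (hPSD : P.PosSemidef) :
    ∃ (F : Finset ℝ) (D : ℝ → ℝ), #F ≤ P.rank ∧ (∀ t ∈ F, t ∈ Set.Ico 0 1 ∧ 0 < D t) ∧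
      P = ∑ t ∈ F, D t • atomMatrix n t := by
  obtain _ | m := n
  · exact ⟨∅, 0, by simp, by simp, Subsingleton.elim _ _⟩
  obtain ⟨w, hwP, hw⟩ := hPSD.exists_gram_eq
  have hshift : gram ℂ (w ∘ Fin.castSucc) = gram ℂ (w ∘ Fin.succ) := by
    ext j k
    have h := hToep j.castSucc k.castSucc j.succ k.succ (by simp)
    rwa [← hwP, gram_apply, gram_apply] at h
  obtain ⟨μ, d, hμ, hd, hwμ⟩ := exists_inner_eq_sum_of_gram_shift hshift
  choose f hf hfμ using fun l =>
    exists_mem_Ico_atomVec_eq_pow (μ := star (μ l)) (by simpa using hμ l)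
  have hPf : P = ∑ l, d l • atomMatrix (m + 1) (f l) := by
    ext j k
    simp [← hwP, hwμ, atomMatrix, Matrix.sum_apply, vecMulVec_apply, hfμ, Complex.real_smul,
      mul_assoc]
  obtain ⟨F, D, hFf, hD, hFD⟩ := exists_sum_smul_comp_eq_sum_pos f hd (atomMatrix (m + 1))
  refine ⟨F, D, (card_le_card hFf).trans (card_image_le.trans (by simp [hw])),
    fun t ht => ⟨?_, hD t ht⟩, hPf.trans hFD⟩
  obtain ⟨l, -, rfl⟩ := mem_image.mp (hFf ht)
  exact hf l

theorem rank_sum_smul_atomMatrix_le (n : ℕ) (F : Finset ℝ) (D : ℝ → ℝ) :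
    (∑ t ∈ F, D t • atomMatrix n t).rank ≤ #F := by
  simpa only [atomMatrix, ← smul_vecMulVec] using rank_sum_vecMulVec_le F _ _

/-- Caratheodory–Toeplitz: every PSD Toeplitz matrix `P` of rank `r` admits a
Vandermonde decomposition `P = V D V*` with distinct frequencies and positive weights. -/
theorem caratheodory_toeplitz (n r : ℕ) (P : Matrix (Fin n) (Fin n) ℂ)
    (hToep : ∀ j k j' k' : Fin n, (j : ℤ) - (k : ℤ) = (j' : ℤ) - (k' : ℤ) → P j k = P j' k')
    (hPSD : P.PosSemidef) (hrank : P.rank = r) :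
    ∃ (f : Fin r → ℝ) (d : Fin r → ℝ),
      Function.Injective f ∧ (∀ l, f l ∈ Set.Ico (0 : ℝ) 1) ∧ (∀ l, 0 < d l) ∧
      ∀ j k : Fin n, P j k = ∑ l, (d l : ℂ) * atomVec n (f l) j * star (atomVec n (f l) k) := by
  obtain ⟨F, D, hFP, hF, hPF⟩ := exists_sum_smul_atomMatrix_of_toeplitz hToep hPSD
  have hcard : #F = r := by
    refine le_antisymm (hrank ▸ hFP) ?_
    rw [← hrank, hPF]
    exact rank_sum_smul_atomMatrix_le n F D
  let e := (F.equivFinOfCardEq hcard).symm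
  refine ⟨fun l => e l, fun l => D (e l), Subtype.val_injective.comp e.injective,
    fun l => (hF _ (e l).2).1, fun l => (hF _ (e l).2).2, fun j k => ?_⟩
  rw [hPF, ← F.sum_coe_sort, ← e.sum_comp]
  simp [atomMatrix, Matrix.sum_apply, vecMulVec_apply, Complex.real_smul, mul_assoc]
end

section
/- Suppose x ∈ ℂⁿ, u ∈ ℂⁿ, and t ∈ ℝ satisfy that the (n+1)×(n+1) block matrix [[Toep(u), x],[x*, t]] is positive semidefinite, where Toep(u) has rank r < n and Vandermonde decomposition Toep(u) = VDV*. Then x lies in the range of V; i.e., x can be written as a linear combination of at most r atoms a(f_k). -/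
open Complex Matrix
open scoped ComplexOrder

/-- The Hermitian Toeplitz matrix with first column `u`. -/
noncomputable def Toep (n : ℕ) (u : Fin n → ℂ) : Matrix (Fin n) (Fin n) ℂ :=
  fun j k =>
    if (k : ℕ) ≤ (j : ℕ) then u ⟨(j : ℕ) - k, Nat.lt_of_le_of_lt (Nat.sub_le _ _) j.isLt⟩
    else star (u ⟨(k : ℕ) - j, Nat.lt_of_le_of_lt (Nat.sub_le _ _) k.isLt⟩)

/-- The block matrix `[[Toep(u), x], [x*, t]]`. -/
noncomputable def blockMat (n : ℕ) (u x : Fin n → ℂ) (t : ℝ) :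
    Matrix (Fin n ⊕ Fin 1) (Fin n ⊕ Fin 1) ℂ :=
  Matrix.fromBlocks (Toep n u) (fun j _ => x j) (fun _ k => star (x k)) (fun _ _ => (t : ℂ))

/-! Testing the positive semidefinite block matrix against `(q, 0)` with `Toep(u) q = 0` shows
that such a `q` is annihilated by the whole block matrix, in particular `x* q = 0`. Since
`Toep(u) = V D V*`, every `q ∈ ker V*` lies in `ker Toep(u)`, so `x ⊥ ker V* = (range V)ᗮ`,
i.e. `x ∈ range V`. -/

namespace Matrix

variable {𝕜 m n : Type*} [RCLike 𝕜] [Fintype m] [Fintype n]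

theorem PosSemidef.conjTranspose_mulVec_eq_zero_of_fromBlocks {A : Matrix m m 𝕜}
    {B : Matrix m n 𝕜} {D : Matrix n n 𝕜} (hM : (fromBlocks A B Bᴴ D).PosSemidef) {q : m → 𝕜}
    (hq : A *ᵥ q = 0) : Bᴴ *ᵥ q = 0 := by
  have hMq : fromBlocks A B Bᴴ D *ᵥ Sum.elim q 0 = 0 := by
    rw [← hM.dotProduct_mulVec_zero_iff, fromBlocks_mulVec]
    simp [dotProduct, Fintype.sum_sum_type, hq]
  simpa [fromBlocks_mulVec] using congrArg (fun v => v ∘ Sum.inr) hMq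

theorem exists_mulVec_eq_of_forall_conjTranspose_mulVec_eq_zero (V : Matrix m n 𝕜)
    {x : m → 𝕜} (hx : ∀ q, Vᴴ *ᵥ q = 0 → q ⬝ᵥ star x = 0) : ∃ w, V *ᵥ w = x := by
  classical
  have hxker : WithLp.toLp 2 x ∈ (toEuclideanLin Vᴴ).kerᗮ :=
    (Submodule.mem_orthogonal' _ _).2 fun q hq =>
      hx q.ofLp (by simpa using congrArg WithLp.ofLp hq)
  rw [LinearMap.orthogonal_ker, ← toEuclideanLin_conjTranspose_eq_adjoint,
    conjTranspose_conjTranspose] at hxker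
  obtain ⟨w, hw⟩ := hxker
  exact ⟨w.ofLp, by simpa using congrArg WithLp.ofLp hw⟩

end Matrix

theorem range_of_block_psd_general (n r : ℕ) (u x : Fin n → ℂ) (t : ℝ)
    (f : Fin r → ℝ) (d : Fin r → ℝ)
    (hdecomp : ∀ j k : Fin n,
      Toep n u j k = ∑ l, (d l : ℂ) * atomVec n (f l) j * star (atomVec n (f l) k))
    (hPSD : (blockMat n u x t).PosSemidef) :
    ∃ w : Fin r → ℂ, ∀ j : Fin n, x j = ∑ l, w l * atomVec n (f l) j := by
  set V : Matrix (Fin n) (Fin r) ℂ := of fun j l => atomVec n (f l) j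
  have hToep : Toep n u = V * diagonal (fun l => (d l : ℂ)) * Vᴴ := by
    ext j k
    rw [hdecomp, mul_apply]
    simp only [mul_diagonal, conjTranspose_apply, V, of_apply]
    exact Finset.sum_congr rfl fun l _ => by ring
  have hblock : blockMat n u x t = fromBlocks (Toep n u) (replicateCol (Fin 1) x)
      (replicateCol (Fin 1) x)ᴴ (of fun _ _ => (t : ℂ)) := rfl
  rw [hblock] at hPSD
  obtain ⟨w, hw⟩ := V.exists_mulVec_eq_of_forall_conjTranspose_mulVec_eq_zero fun q hq => by
    have hToepq : Toep n u *ᵥ q = 0 := by rw [hToep, ← mulVec_mulVec, hq, mulVec_zero]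
    simpa [mulVec, dotProduct_comm, Pi.star_def] using
      congrFun (hPSD.conjTranspose_mulVec_eq_zero_of_fromBlocks hToepq) 0
  exact ⟨w, fun j => by simp [← hw, mulVec, dotProduct, V, mul_comm]⟩

/-- If the block matrix `[[Toep(u), x],[x*, t]]` is PSD and `Toep(u) = VDV*` is a Vandermonde
decomposition of rank `r < n`, then `x` lies in the range of `V`. -/
theorem range_of_block_psd (n r : ℕ) (hr : r < n) (u x : Fin n → ℂ) (t : ℝ)
    (f : Fin r → ℝ) (d : Fin r → ℝ)
    (hf : Function.Injective f) (hf' : ∀ l, f l ∈ Set.Ico (0 : ℝ) 1) (hd : ∀ l, 0 < d l)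
    (hrank : (Toep n u).rank = r)
    (hdecomp : ∀ j k : Fin n,
      Toep n u j k = ∑ l, (d l : ℂ) * atomVec n (f l) j * star (atomVec n (f l) k))
    (hPSD : (blockMat n u x t).PosSemidef) :
    ∃ w : Fin r → ℂ, ∀ j : Fin n, x j = ∑ l, w l * atomVec n (f l) j :=
  range_of_block_psd_general n r u x t f d hdecomp hPSD
end

section
/- If VDV* ⪰ t^{-1}Vww*V* where V ∈ ℂ^{n×r} is full column rank, D is diagonal positive, t > 0, and w ∈ ℂ^r, then trace(D)·t ≥ (∑_k |w_k|)². -/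
/-!
Full column rank makes `Vᴴ` surjective, so some `z` has `Vᴴ z = u`, where
`u l = exp (i arg w_l)` is the phase vector of `w`. Testing the Loewner inequality on `z` gives
`∑ d_l |u_l|² ≥ t⁻¹ |⟪u, w⟫|²`, that is `∑ d_l ≥ t⁻¹ (∑ |w_l|)²`.
-/

open Complex Matrix
open scoped ComplexOrder

theorem Matrix.mulVec_surjective_of_rank_eq_card {m n K : Type*} [Fintype m] [Fintype n] [Field K]
    (A : Matrix m n K) (hA : A.rank = Fintype.card m) : Function.Surjective A.mulVec := by
  have : LinearMap.range A.mulVecLin = ⊤ :=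
    Submodule.eq_top_of_finrank_eq (by rw [← Matrix.rank, hA, Module.finrank_fintype_fun_eq_card])
  exact LinearMap.range_eq_top.mp this

theorem Matrix.dotProduct_mul_mul_conjTranspose_mulVec {m n R : Type*} [Fintype m] [Fintype n]
    [CommSemiring R] [StarRing R] (A : Matrix m n R) (B : Matrix n n R) (z : m → R) :
    star z ⬝ᵥ (A * B * Aᴴ) *ᵥ z = star (Aᴴ *ᵥ z) ⬝ᵥ B *ᵥ (Aᴴ *ᵥ z) := by
  rw [← mulVec_mulVec, ← mulVec_mulVec, dotProduct_mulVec, star_mulVec,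
    conjTranspose_conjTranspose]

theorem Matrix.dotProduct_vecMulVec_star_mulVec {n R : Type*} [Fintype n] [CommSemiring R]
    [StarRing R] (a z : n → R) :
    star z ⬝ᵥ vecMulVec a (star a) *ᵥ z = (star z ⬝ᵥ a) * star (star z ⬝ᵥ a) := by
  rw [vecMulVec_mulVec, op_smul_eq_smul, dotProduct_smul, smul_eq_mul, star_dotProduct a z,
    mul_comm]

theorem Matrix.star_dotProduct_diagonal_mulVec_of_norm_eq_one {n 𝕜 : Type*} [Fintype n]
    [DecidableEq n] [RCLike 𝕜] (c x : n → 𝕜) (hx : ∀ l, ‖x l‖ = 1) :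
    star x ⬝ᵥ diagonal c *ᵥ x = ∑ l, c l := by
  refine Finset.sum_congr rfl fun l _ => ?_
  rw [mulVec_diagonal, Pi.star_apply, RCLike.star_def, mul_left_comm, RCLike.conj_mul, hx]
  simp

theorem Complex.conj_exp_arg_mul_I_mul (z : ℂ) :
    starRingEnd ℂ (exp (arg z * I)) * z = ‖z‖ := by
  nth_rw 2 [← norm_mul_exp_arg_mul_I z]
  rw [mul_left_comm, conj_mul', norm_exp_ofReal_mul_I]
  simp

theorem trace_mul_t_ge_sq_general (n r : ℕ) (V : Matrix (Fin n) (Fin r) ℂ)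
    (hV : V.rank = r) (d : Fin r → ℝ) (t : ℝ) (ht : 0 < t)
    (w : Fin r → ℂ)
    (hLoewner : (V * Matrix.diagonal (fun l => (d l : ℂ)) * Vᴴ -
      (t⁻¹ : ℂ) • Matrix.vecMulVec (V.mulVec w) (star (V.mulVec w))).PosSemidef) :
    (∑ l, ‖w l‖) ^ 2 ≤ (∑ l, d l) * t := by
  set u : Fin r → ℂ := fun l => exp (arg (w l) * I)
  obtain ⟨z, hz⟩ : ∃ z, Vᴴ *ᵥ z = u :=
    Vᴴ.mulVec_surjective_of_rank_eq_card (by rw [rank_conjTranspose, hV, Fintype.card_fin]) u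
  have hzVw : star z ⬝ᵥ V *ᵥ w = ((∑ l, ‖w l‖ : ℝ) : ℂ) := by
    rw [dotProduct_mulVec, ← conjTranspose_conjTranspose V, ← star_mulVec, hz, ofReal_sum]
    exact Finset.sum_congr rfl fun l _ => conj_exp_arg_mul_I_mul (w l)
  have hquad := hLoewner.dotProduct_mulVec_nonneg z
  rw [sub_mulVec, dotProduct_sub, dotProduct_mul_mul_conjTranspose_mulVec, hz,
    star_dotProduct_diagonal_mulVec_of_norm_eq_one _ _ fun l => norm_exp_ofReal_mul_I _,
    smul_mulVec, dotProduct_smul, dotProduct_vecMulVec_star_mulVec, hzVw] at hquad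
  have hreal : 0 ≤ ∑ l, d l - t⁻¹ * (∑ l, ‖w l‖) ^ 2 := by
    rw [← ofReal_sum, RCLike.star_def, conj_ofReal, smul_eq_mul, ← ofReal_inv,
      ← ofReal_mul, ← ofReal_mul, ← ofReal_sub, zero_le_real] at hquad
    linarith
  rw [sub_nonneg, inv_mul_le_iff₀ ht] at hreal
  linarith

/-- If `VDV* ⪰ t⁻¹ V w w* V*` with `V` full column rank, `D` diagonal positive and `t > 0`,
then `trace(D)·t ≥ (∑_k |w_k|)²`. -/
theorem trace_mul_t_ge_sq (n r : ℕ) (V : Matrix (Fin n) (Fin r) ℂ)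
    (hV : V.rank = r) (d : Fin r → ℝ) (hd : ∀ l, 0 < d l) (t : ℝ) (ht : 0 < t)
    (w : Fin r → ℂ)
    (hLoewner : (V * Matrix.diagonal (fun l => (d l : ℂ)) * Vᴴ -
      (t⁻¹ : ℂ) • Matrix.vecMulVec (V.mulVec w) (star (V.mulVec w))).PosSemidef) :
    (∑ l, ‖w l‖) ^ 2 ≤ (∑ l, d l) * t :=
  trace_mul_t_ge_sq_general n r V hV d t ht w hLoewner
end

section
/- Suppose Q : [0,1] → ℂ is twice continuously differentiable, Q_R = Re Q, Q_I = Im Q, and on an interval I around f_k one has Q_R ≥ 0.9, |Q_I| ≤ 0.04, Q_R'' ≤ −0.3·κ, |Q_I''| ≤ 0.6·κ, |Q'| ≤ 0.44·√κ for some κ > 0, and furthermore Q_R Q_R'' + |Q'|² + |Q_I||Q_I''| < 0 on I. If |Q(f_k)| = 1 and Q'(f_k) = 0, then |Q(f)| < 1 for all f ∈ I with f ≠ f_k. -/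
/-!
The squared modulus `g = ‖Q‖² = Q_R² + Q_I²` has `g'' = 2 (|Q'|² + Q_R Q_R'' + Q_I Q_I'')`,
which the last hypothesis makes negative on `I`, since `Q_I Q_I'' ≤ |Q_I| |Q_I''|`. So `g` is
strictly concave on `I`; as `g'(f_k) = 2 ⟪Q(f_k), Q'(f_k)⟫ = 0`, the point `f_k` is its strict
maximum on `I`, with value `1`.
-/

open Set
open scoped RealInnerProductSpace

theorem ContinuousLinearMap.iteratedDeriv_comp_left {𝕜 F G : Type*} [NontriviallyNormedField 𝕜]
    [NormedAddCommGroup F] [NormedSpace 𝕜 F] [NormedAddCommGroup G] [NormedSpace 𝕜 G]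
    {f : 𝕜 → F} {x : 𝕜} {n : WithTop ℕ∞} (g : F →L[𝕜] G) (hf : ContDiffAt 𝕜 n f x) {i : ℕ}
    (hi : i ≤ n) : iteratedDeriv i (g ∘ f) x = g (iteratedDeriv i f x) := by
  simp [iteratedDeriv_eq_iteratedFDeriv, g.iteratedFDeriv_comp_left hf hi]

theorem Complex.iteratedDeriv_re {Q : ℝ → ℂ} {n : ℕ} (hQ : ContDiff ℝ n Q) (t : ℝ) :
    iteratedDeriv n (fun s => (Q s).re) t = (iteratedDeriv n Q t).re :=
  reCLM.iteratedDeriv_comp_left hQ.contDiffAt le_rfl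

theorem Complex.iteratedDeriv_im {Q : ℝ → ℂ} {n : ℕ} (hQ : ContDiff ℝ n Q) (t : ℝ) :
    iteratedDeriv n (fun s => (Q s).im) t = (iteratedDeriv n Q t).im :=
  imCLM.iteratedDeriv_comp_left hQ.contDiffAt le_rfl

theorem Complex.real_inner_le_re_mul_re_add_abs_im_mul (z w : ℂ) :
    ⟪z, w⟫ ≤ z.re * w.re + |z.im| * |w.im| := by
  rw [Complex.inner, ← abs_mul]
  simpa [mul_comm] using le_abs_self (z.im * w.im)

section NormSq

variable {F : Type*} [NormedAddCommGroup F] [InnerProductSpace ℝ F] {f : ℝ → F}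

theorem iteratedDeriv_two_norm_sq (hf : ContDiff ℝ 2 f) (t : ℝ) :
    iteratedDeriv 2 (‖f ·‖ ^ 2) t = 2 * (‖deriv f t‖ ^ 2 + ⟪f t, iteratedDeriv 2 f t⟫) := by
  have hd := hf.differentiable two_ne_zero
  have hd' : Differentiable ℝ (deriv f) := by
    simpa using hf.differentiable_iteratedDeriv 1 (by norm_num)
  have hderiv : deriv (‖f ·‖ ^ 2) = fun s => 2 * ⟪f s, deriv f s⟫ :=
    funext fun s => (hd s).hasDerivAt.norm_sq.deriv
  rw [iteratedDeriv_succ, iteratedDeriv_one, hderiv, iteratedDeriv_succ, iteratedDeriv_one,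
    (((hd t).hasDerivAt.inner ℝ (hd' t).hasDerivAt).const_mul 2).deriv,
    real_inner_self_eq_norm_sq]
  ring

theorem ContDiff.strictConcaveOn_norm_sq (hf : ContDiff ℝ 2 f) {s : Set ℝ} (hs : Convex ℝ s)
    (h : ∀ t ∈ interior s, ‖deriv f t‖ ^ 2 + ⟪f t, iteratedDeriv 2 f t⟫ < 0) :
    StrictConcaveOn ℝ s (‖f ·‖ ^ 2) :=
  strictConcaveOn_of_deriv2_neg hs (hf.continuous.norm.pow 2).continuousOn fun t ht => by
    rw [← iteratedDeriv_eq_iterate, iteratedDeriv_two_norm_sq hf]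
    linarith [h t ht]

end NormSq

theorem StrictConcaveOn.lt_of_hasDerivAt_eq_zero {S : Set ℝ} {g : ℝ → ℝ} {x y : ℝ}
    (hg : StrictConcaveOn ℝ S g) (hx : x ∈ S) (hgx : HasDerivAt g 0 x) (hy : y ∈ S)
    (hyx : y ≠ x) : g y < g x := by
  rcases hyx.lt_or_gt with hlt | hgt
  · have := hg.lt_slope_of_hasDerivAt hy hx hlt hgx
    rw [slope_def_field, div_pos_iff_of_pos_right (sub_pos.2 hlt)] at this
    linarith
  · have := hg.slope_lt_of_hasDerivAt hx hy hgt hgx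
    rw [slope_def_field, div_lt_iff₀ (sub_pos.2 hgt), zero_mul] at this
    linarith

theorem modulus_lt_one_near_peak_general (Q : ℝ → ℂ) (hQ : ContDiff ℝ 2 Q)
    (a b fk : ℝ) (hfk : fk ∈ Set.Ioo a b)
    (QR QI : ℝ → ℝ) (hQR : QR = fun f => (Q f).re) (hQI : QI = fun f => (Q f).im)
    (h6 : ∀ f ∈ Set.Icc a b,
      QR f * iteratedDeriv 2 QR f + ‖deriv Q f‖ ^ 2 + |QI f| * |iteratedDeriv 2 QI f| < 0)
    (hpeak : ‖Q fk‖ = 1) (hderiv : deriv Q fk = 0) :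
    ∀ f ∈ Set.Icc a b, f ≠ fk → ‖Q f‖ < 1 := by
  subst hQR hQI
  intro f hf hne
  have hconc : StrictConcaveOn ℝ (Icc a b) (‖Q ·‖ ^ 2) :=
    hQ.strictConcaveOn_norm_sq (convex_Icc a b) fun t ht => by
      have h6t := h6 t (interior_subset ht)
      rw [Complex.iteratedDeriv_re hQ, Complex.iteratedDeriv_im hQ] at h6t
      linarith [Complex.real_inner_le_re_mul_re_add_abs_im_mul (Q t) (iteratedDeriv 2 Q t)]
  have hcrit : HasDerivAt (‖Q ·‖ ^ 2) 0 fk := by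
    simpa [hderiv] using ((hQ.differentiable two_ne_zero) fk).hasDerivAt.norm_sq
  have hlt := hconc.lt_of_hasDerivAt_eq_zero (Ioo_subset_Icc_self hfk) hcrit hf hne
  rw [hpeak, one_pow] at hlt
  exact (sq_lt_one_iff₀ (norm_nonneg _)).mp hlt

/-- Local maximum principle for the dual polynomial near a frequency: under the stated
bounds on `Q` and its derivatives on an interval `I` around `f_k`, with `|Q(f_k)| = 1` and
`Q'(f_k) = 0`, we have `|Q(f)| < 1` on `I` away from `f_k`. -/
theorem modulus_lt_one_near_peak (Q : ℝ → ℂ) (hQ : ContDiff ℝ 2 Q)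
    (a b fk : ℝ) (hfk : fk ∈ Set.Ioo a b) (κ : ℝ) (hκ : 0 < κ)
    (QR QI : ℝ → ℝ) (hQR : QR = fun f => (Q f).re) (hQI : QI = fun f => (Q f).im)
    (hne : ∀ f ∈ Set.Icc a b, Q f ≠ 0)
    (h1 : ∀ f ∈ Set.Icc a b, 0.9 ≤ QR f)
    (h2 : ∀ f ∈ Set.Icc a b, |QI f| ≤ 0.04)
    (h3 : ∀ f ∈ Set.Icc a b, iteratedDeriv 2 QR f ≤ -0.3 * κ)
    (h4 : ∀ f ∈ Set.Icc a b, |iteratedDeriv 2 QI f| ≤ 0.6 * κ)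
    (h5 : ∀ f ∈ Set.Icc a b, ‖deriv Q f‖ ≤ 0.44 * Real.sqrt κ)
    (h6 : ∀ f ∈ Set.Icc a b,
      QR f * iteratedDeriv 2 QR f + ‖deriv Q f‖ ^ 2 + |QI f| * |iteratedDeriv 2 QI f| < 0)
    (hpeak : ‖Q fk‖ = 1) (hderiv : deriv Q fk = 0) :
    ∀ f ∈ Set.Icc a b, f ≠ fk → ‖Q f‖ < 1 :=
  modulus_lt_one_near_peak_general Q hQ a b fk hfk QR QI hQR hQI h6 hpeak hderiv
end
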